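/- If M is an irreducible nonnegative real square matrix with Perron–Frobenius eigenvalue λ, then there exists a positive integer h such that the set of eigenvalues μ of M with |μ| = λ is exactly { exp(2πik/h)·λ : k = 0, …, h−1 }. -/

import Mathlib

def Matrix.IsIrreducible' {m : ℕ} (M : Matrix (Fin m) (Fin m) ℝ) : Prop :=
  ∀ i j : Fin m, ∃ n : ℕ, 0 < (M ^ (n + 1)) i j

/-- The characteristic polynomial of a real matrix, viewed over `ℂ`; its roots are the
complex eigenvalues of `M`. -/
noncomputable def Matrix.complexCharpoly {m : ℕ} (M : Matrix (Fin m) (Fin m) ℝ) :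
    Polynomial ℂ :=
  (M.map (algebraMap ℝ ℂ)).charpoly

/-!
Let `r` be the Perron–Frobenius eigenvalue. Every eigenvalue of `Aᵏ` is the `k`-th power of an
eigenvalue of `A`, so `trace (Aᵏ) ≤ m rᵏ`. As irreducibility makes `B = ∑ₗ Aˡ⁺¹` entrywise
positive, the traces of `Aᵏ B` then rule out a positive vector `u` with `A u ≥ t u` for some
`t > r` (Collatz–Wielandt). Consequently a nonnegative `z ≠ 0` with `A z ≥ r z` is a positive
eigenvector for `r`.

If `A y = μ y` with `|μ| = r`, this applies to `z = |y|`, so the triangle inequality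
`r |y| ≤ A |y|` is an equality in every row. This aligns the phases: `y = D z` for a diagonal
`D` with `A D = (μ / r) D A`, hence the spectrum of `A` is invariant under multiplication by
`μ / r`. The normalised dominant eigenvalues thus form a finite multiplicatively closed set of
nonzero numbers containing `1`, i.e. the group of `h`-th roots of unity for `h` its size.
-/

open Polynomial Matrix Finset

theorem le_of_forall_mul_pow_le {a C r t : ℝ} (ha : 0 < a) (hr : 0 < r)
    (h : ∀ k : ℕ, a * t ^ k ≤ C * r ^ k) : t ≤ r := by
  by_contra! hrt
  obtain ⟨k, hk⟩ := pow_unbounded_of_one_lt (C / a) ((one_lt_div hr).2 hrt)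
  rw [div_pow, lt_div_iff₀ (pow_pos hr k), div_mul_eq_mul_div, div_lt_iff₀ ha] at hk
  linarith [h k]

theorem exists_pos_mul_le {ι : Type*} [Finite ι] {f g : ι → ℝ} (hf : ∀ i, 0 < f i)
    (hg : ∀ i, 0 < g i) : ∃ c > 0, ∀ i, c * g i ≤ f i := by
  cases isEmpty_or_nonempty ι
  · exact ⟨1, one_pos, isEmptyElim⟩
  obtain ⟨i₀, hi₀⟩ := Finite.exists_min fun i => f i / g i
  exact ⟨f i₀ / g i₀, div_pos (hf i₀) (hg i₀), fun i => (le_div_iff₀ (hg i)).1 (hi₀ i)⟩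

theorem sameRay_sum_of_norm_sum_eq_sum_norm {E ι : Type*} [NormedAddCommGroup E]
    [NormedSpace ℝ E] [StrictConvexSpace ℝ E] {s : Finset ι} {v : ι → E}
    (h : ‖∑ i ∈ s, v i‖ = ∑ i ∈ s, ‖v i‖) {k : ι} (hk : k ∈ s) :
    SameRay ℝ (v k) (∑ i ∈ s, v i) := by
  classical
  rw [← add_sum_erase s v hk]
  refine (SameRay.refl _).add_right (sameRay_iff_norm_add.2 ?_)
  refine le_antisymm (norm_add_le _ _) ?_
  calc ‖v k‖ + ‖∑ i ∈ s.erase k, v i‖ ≤ ‖v k‖ + ∑ i ∈ s.erase k, ‖v i‖ := by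
        gcongr; exact norm_sum_le _ _
    _ = ‖∑ i ∈ s, v i‖ := by rw [add_sum_erase s (fun i => ‖v i‖) hk, h]
    _ = _ := by rw [add_sum_erase s v hk]

theorem Finset.pow_card_eq_one_of_mul_mem {R : Type*} [CommRing R] [IsDomain R]
    {T : Finset R} (h0 : (0 : R) ∉ T) (hmul : ∀ x ∈ T, ∀ y ∈ T, x * y ∈ T) {x : R}
    (hx : x ∈ T) : x ^ #T = 1 := by
  classical
  have hx0 : x ≠ 0 := ne_of_mem_of_not_mem hx h0
  have himage : T.image (x * ·) = T :=
    eq_of_subset_of_card_le (image_subset_iff.2 fun y hy => hmul x hx y hy)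
      (card_image_of_injective _ (mul_right_injective₀ hx0)).ge
  have hprod : x ^ #T * ∏ y ∈ T, y = ∏ y ∈ T, y := by
    conv_rhs => rw [← himage, prod_image fun a _ b _ hab => mul_left_cancel₀ hx0 hab]
    rw [prod_mul_distrib, prod_const]
  exact mul_eq_right₀ (prod_ne_zero_iff.2 fun y hy => ne_of_mem_of_not_mem hy h0) |>.1 hprod

theorem Finset.mem_iff_pow_card_eq_one_of_mul_mem {R : Type*} [CommRing R] [IsDomain R]
    {T : Finset R} (hT : T.Nonempty) (h0 : (0 : R) ∉ T) (hmul : ∀ x ∈ T, ∀ y ∈ T, x * y ∈ T)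
    {x : R} : x ∈ T ↔ x ^ #T = 1 := by
  have hsub : T ⊆ nthRootsFinset #T (1 : R) := fun y hy =>
    (mem_nthRootsFinset hT.card_pos 1).2 (pow_card_eq_one_of_mul_mem h0 hmul hy)
  have hcard : #(nthRootsFinset #T (1 : R)) ≤ #T := by
    classical
    rw [nthRootsFinset_def]
    exact (Multiset.toFinset_card_le _).trans (card_nthRoots _ _)
  exact (Finset.ext_iff.1 (eq_of_subset_of_card_le hsub hcard) x).trans
    (mem_nthRootsFinset hT.card_pos 1)

theorem Complex.pow_eq_one_iff_exists_exp {h : ℕ} (hh : h ≠ 0) {x : ℂ} :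
    x ^ h = 1 ↔ ∃ k < h, x = exp (2 * Real.pi * I * k / h) := by
  have : NeZero h := ⟨hh⟩
  have hζ := isPrimitiveRoot_exp h hh
  have hexp : ∀ k : ℕ, exp (2 * Real.pi * I * k / h) = exp (2 * Real.pi * I / h) ^ k := by
    intro k
    rw [← exp_nat_mul]
    congr 1
    ring
  constructor
  · intro hx
    obtain ⟨k, hk, rfl⟩ := hζ.eq_pow_of_pow_eq_one hx
    exact ⟨k, hk, (hexp k).symm⟩
  · rintro ⟨k, -, rfl⟩
    rw [hexp, pow_right_comm, hζ.pow_eq_one, one_pow]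

namespace Matrix

variable {n : Type*}

theorem norm_map_algebraMap_mul {A : Matrix n n ℝ} (hA : ∀ i j, 0 ≤ A i j) (i j : n) (y : ℂ) :
    ‖A.map (algebraMap ℝ ℂ) i j * y‖ = A i j * ‖y‖ := by
  rw [map_apply, norm_mul, Complex.coe_algebraMap, Complex.norm_real,
    Real.norm_of_nonneg (hA i j)]

variable [Fintype n]

theorem norm_smul_le_mulVec_norm {A : Matrix n n ℝ} (hA : ∀ i j, 0 ≤ A i j) {μ : ℂ} {y : n → ℂ}
    (hy : A.map (algebraMap ℝ ℂ) *ᵥ y = μ • y) : ‖μ‖ • (‖y ·‖) ≤ A *ᵥ (‖y ·‖) := fun i =>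
  calc ‖μ‖ * ‖y i‖ = ‖(A.map (algebraMap ℝ ℂ) *ᵥ y) i‖ := by
        rw [hy, Pi.smul_apply, smul_eq_mul, norm_mul]
    _ ≤ ∑ j, ‖A.map (algebraMap ℝ ℂ) i j * y j‖ := norm_sum_le _ _
    _ = (A *ᵥ (‖y ·‖)) i := by simp only [norm_map_algebraMap_mul hA]; rfl

section OrderedRing

variable {R : Type*} [CommRing R] [LinearOrder R] [IsStrictOrderedRing R]

theorem mulVec_mono_of_nonneg {A : Matrix n n R} (hA : ∀ i j, 0 ≤ A i j) {u v : n → R}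
    (huv : u ≤ v) : A *ᵥ u ≤ A *ᵥ v :=
  fun i => sum_le_sum fun j _ => mul_le_mul_of_nonneg_left (huv j) (hA i j)

theorem mulVec_pos_of_pos {B : Matrix n n R} (hB : ∀ i j, 0 < B i j) {v : n → R} (hv : 0 ≤ v)
    (hv0 : v ≠ 0) (i : n) : 0 < (B *ᵥ v) i := by
  obtain ⟨j, hj⟩ := Function.ne_iff.1 hv0
  exact sum_pos' (fun k _ => mul_nonneg (hB i k).le (hv k))
    ⟨j, mem_univ j, mul_pos (hB i j) ((hv j).lt_of_ne' hj)⟩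

variable [DecidableEq n]

theorem pow_smul_le_pow_mulVec {A : Matrix n n R} (hA : ∀ i j, 0 ≤ A i j) {t : R} (ht : 0 ≤ t)
    {u : n → R} (h : t • u ≤ A *ᵥ u) (k : ℕ) : t ^ k • u ≤ (A ^ k) *ᵥ u := by
  induction k with
  | zero => simp
  | succ k ih =>
    calc t ^ (k + 1) • u = t ^ k • t • u := by rw [pow_succ, mul_smul]
      _ ≤ t ^ k • (A *ᵥ u) := smul_le_smul_of_nonneg_left h (pow_nonneg ht k)
      _ = A *ᵥ (t ^ k • u) := (mulVec_smul A _ u).symm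
      _ ≤ A *ᵥ ((A ^ k) *ᵥ u) := mulVec_mono_of_nonneg hA ih
      _ = (A ^ (k + 1)) *ᵥ u := by rw [mulVec_mulVec, pow_succ']

theorem IsIrreducible.exists_sum_pow_pos {A : Matrix n n R} (hA : A.IsIrreducible) :
    ∃ K, ∀ i j, 0 < (∑ l ∈ range K, A ^ (l + 1)) i j := by
  choose k hk hpos using (isIrreducible_iff_exists_pow_pos hA.nonneg).1 hA
  refine ⟨univ.sup fun p : n × n => k p.1 p.2, fun i j => ?_⟩
  have hle : k i j ≤ univ.sup fun p : n × n => k p.1 p.2 :=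
    le_sup (f := fun p : n × n => k p.1 p.2) (mem_univ (i, j))
  have hk₀ := hk i j
  have hmem : k i j - 1 ∈ range (univ.sup fun p : n × n => k p.1 p.2) := by
    rw [mem_range]
    omega
  rw [sum_apply]
  refine (hpos i j).trans_le ?_
  convert single_le_sum (fun l _ => pow_apply_nonneg hA.nonneg (l + 1) i j) hmem
  omega

end OrderedRing

variable [DecidableEq n]

theorem pow_mulVec_eq_smul {R : Type*} [CommSemiring R] {A : Matrix n n R} {t : R} {u : n → R}
    (h : A *ᵥ u = t • u) (k : ℕ) : (A ^ k) *ᵥ u = t ^ k • u := by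
  induction k with
  | zero => simp
  | succ k ih => rw [pow_succ', ← mulVec_mulVec, ih, mulVec_smul, h, smul_smul, pow_succ]

theorem exists_mulVec_eq_smul_of_isRoot_charpoly {K : Type*} [Field K] {N : Matrix n n K} {μ : K}
    (h : N.charpoly.IsRoot μ) : ∃ v ≠ 0, N *ᵥ v = μ • v := by
  rw [IsRoot, eval_charpoly, ← exists_mulVec_eq_zero_iff] at h
  obtain ⟨v, hv, hμv⟩ := h
  refine ⟨v, hv, ?_⟩
  rw [sub_mulVec, sub_eq_zero, scalar_apply, ← smul_one_eq_diagonal, smul_mulVec,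
    one_mulVec] at hμv
  exact hμv.symm

theorem isRoot_charpoly_mul_of_mul_eq_smul_mul {K : Type*} [Field K] {N D : Matrix n n K}
    (hD : D.det ≠ 0) {ω : K} (h : N * D = ω • (D * N)) {ν : K} (hν : N.charpoly.IsRoot ν) :
    N.charpoly.IsRoot (ω * ν) := by
  have key : (scalar n (ω * ν) - N) * D = ω • (D * (scalar n ν - N)) := by
    simp only [sub_mul, h, mul_sub, smul_sub, scalar_apply, ← smul_one_eq_diagonal,
      smul_mul_assoc, mul_smul_comm, one_mul, mul_one, smul_smul]
  have hdet := congrArg det key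
  rw [det_mul, det_smul, det_mul, ← eval_charpoly N ν, hν.eq_zero, mul_zero, mul_zero,
    ← eval_charpoly] at hdet
  exact (mul_eq_zero.1 hdet).resolve_right hD

theorem norm_trace_pow_le {N : Matrix n n ℂ} {r : ℝ} (hN : ∀ μ, N.charpoly.IsRoot μ → ‖μ‖ ≤ r)
    {k : ℕ} (hk : k ≠ 0) : ‖(N ^ k).trace‖ ≤ Fintype.card n * r ^ k := by
  rw [trace_eq_sum_roots_charpoly]
  calc ‖(N ^ k).charpoly.roots.sum‖ ≤ ((N ^ k).charpoly.roots.map (‖·‖)).sum :=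
        norm_multiset_sum_le _
    _ ≤ Multiset.card ((N ^ k).charpoly.roots.map (‖·‖)) • r ^ k := by
        refine Multiset.sum_le_card_nsmul _ _ fun x hx => ?_
        obtain ⟨ν, hν, rfl⟩ := Multiset.mem_map.1 hx
        have : ν ∈ spectrum ℂ (N ^ k) :=
          mem_spectrum_iff_isRoot_charpoly.2 (isRoot_of_mem_roots hν)
        rw [spectrum.map_pow_of_pos N (Nat.pos_of_ne_zero hk)] at this
        obtain ⟨μ, hμ, rfl⟩ := this
        rw [norm_pow]
        exact pow_le_pow_left₀ (norm_nonneg μ) (hN μ (mem_spectrum_iff_isRoot_charpoly.1 hμ)) k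
    _ = Fintype.card n * r ^ k := by
        rw [Multiset.card_map, splits_iff_card_roots.1 (IsAlgClosed.splits _),
          charpoly_natDegree_eq_dim, nsmul_eq_mul]

section Real

variable {A : Matrix n n ℝ} {r : ℝ}

theorem trace_pow_le (hdom : ∀ μ, (A.map (algebraMap ℝ ℂ)).charpoly.IsRoot μ → ‖μ‖ ≤ r)
    {k : ℕ} (hk : k ≠ 0) : (A ^ k).trace ≤ Fintype.card n * r ^ k := by
  have h := norm_trace_pow_le hdom hk
  rw [← Matrix.map_pow, ← AddMonoidHom.map_trace, Complex.coe_algebraMap, Complex.norm_real,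
    Real.norm_eq_abs] at h
  exact (le_abs_self _).trans h

theorem IsIrreducible.le_of_smul_le_mulVec [Nonempty n] (hA : A.IsIrreducible)
    (hdom : ∀ μ, (A.map (algebraMap ℝ ℂ)).charpoly.IsRoot μ → ‖μ‖ ≤ r) (hr : 0 < r)
    {u : n → ℝ} (hu : ∀ i, 0 < u i) {t : ℝ} (h : t • u ≤ A *ᵥ u) : t ≤ r := by
  rcases le_or_gt t 0 with ht | ht
  · exact ht.trans hr.le
  obtain ⟨K, hK⟩ := hA.exists_sum_pow_pos
  set B := ∑ l ∈ range K, A ^ (l + 1)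
  obtain ⟨c, hc, hcB⟩ := exists_pos_mul_le (f := fun p : n × n => B p.1 p.2)
    (g := fun p => u p.1) (fun p => hK p.1 p.2) (fun p => hu p.1)
  -- `c` is chosen so that `c • u ≤ B` columnwise; sandwich `trace (Aᵏ B)` between `c (∑ u) tᵏ`
  -- and a multiple of `rᵏ`.
  refine le_of_forall_mul_pow_le (C := Fintype.card n * ∑ l ∈ range K, r ^ (l + 1))
    (mul_pos hc (sum_pos (fun i _ => hu i) univ_nonempty)) hr fun k => ?_
  calc c * (∑ i, u i) * t ^ k = ∑ i, c * (t ^ k • u) i := by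
        simp only [Pi.smul_apply, smul_eq_mul, mul_sum, sum_mul]
        exact sum_congr rfl fun i _ => by ring
    _ ≤ ∑ i, c * ((A ^ k) *ᵥ u) i := sum_le_sum fun i _ =>
        mul_le_mul_of_nonneg_left (pow_smul_le_pow_mulVec hA.nonneg ht.le h k i) hc.le
    _ ≤ ∑ i, ∑ j, (A ^ k) i j * B j i := sum_le_sum fun i _ => by
        simp only [mulVec, dotProduct, mul_sum]
        exact sum_le_sum fun j _ => by
          rw [mul_left_comm]
          exact mul_le_mul_of_nonneg_left (hcB (j, i)) (pow_apply_nonneg hA.nonneg k i j)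
    _ = (A ^ k * B).trace := by simp only [trace, diag, mul_apply]
    _ = ∑ l ∈ range K, (A ^ (k + (l + 1))).trace := by
        simp_rw [B, mul_sum, trace_sum, ← pow_add]
    _ ≤ ∑ l ∈ range K, Fintype.card n * r ^ (k + (l + 1)) :=
        sum_le_sum fun l _ => trace_pow_le hdom (by omega)
    _ = (Fintype.card n * ∑ l ∈ range K, r ^ (l + 1)) * r ^ k := by
        simp only [mul_sum, sum_mul]
        exact sum_congr rfl fun l _ => by ring

theorem IsIrreducible.pos_of_mulVec_eq_smul (hA : A.IsIrreducible) (hr : 0 ≤ r) {z : n → ℝ}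
    (hz : 0 ≤ z) (hz0 : z ≠ 0) (h : A *ᵥ z = r • z) (i : n) : 0 < z i := by
  obtain ⟨K, hK⟩ := hA.exists_sum_pow_pos
  have hBz := mulVec_pos_of_pos hK hz hz0 i
  simp only [sum_mulVec, pow_mulVec_eq_smul h, ← sum_smul, Pi.smul_apply, smul_eq_mul] at hBz
  exact pos_of_mul_pos_right hBz (sum_nonneg fun l _ => pow_nonneg hr _)

theorem IsIrreducible.mulVec_eq_smul_of_smul_le_mulVec (hA : A.IsIrreducible)
    (hdom : ∀ μ, (A.map (algebraMap ℝ ℂ)).charpoly.IsRoot μ → ‖μ‖ ≤ r) (hr : 0 < r)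
    {z : n → ℝ} (hz : 0 ≤ z) (hz0 : z ≠ 0) (h : r • z ≤ A *ᵥ z) : A *ᵥ z = r • z := by
  obtain ⟨i, -⟩ := Function.ne_iff.1 hz0
  have : Nonempty n := ⟨i⟩
  by_contra hne
  obtain ⟨K, hK⟩ := hA.exists_sum_pow_pos
  set B := ∑ l ∈ range K, A ^ (l + 1)
  set w := A *ᵥ z - r • z
  have hBz := mulVec_pos_of_pos hK hz hz0
  have hBw := mulVec_pos_of_pos hK (sub_nonneg.2 h) (sub_ne_zero.2 hne)
  obtain ⟨c, hc, hcw⟩ := exists_pos_mul_le hBw hBz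
  have hAB : A *ᵥ (B *ᵥ z) = r • (B *ᵥ z) + B *ᵥ w := by
    have hcomm : A * B = B * A := (Commute.sum_right _ _ _ fun l _ => Commute.self_pow A _).eq
    rw [mulVec_mulVec, hcomm, ← mulVec_mulVec, ← mulVec_smul, ← mulVec_add, add_sub_cancel]
  have := hA.le_of_smul_le_mulVec hdom hr hBz (t := r + c) fun i => by
    rw [hAB, Pi.add_apply, Pi.smul_apply, Pi.smul_apply, smul_eq_mul, smul_eq_mul, add_mul]
    linarith [hcw i]
  linarith

theorem IsIrreducible.exists_mul_diagonal_eq_smul_diagonal_mul (hA : A.IsIrreducible)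
    (hdom : ∀ μ, (A.map (algebraMap ℝ ℂ)).charpoly.IsRoot μ → ‖μ‖ ≤ r) (hr : 0 < r) {μ : ℂ}
    (hμ : (A.map (algebraMap ℝ ℂ)).charpoly.IsRoot μ) (hμr : ‖μ‖ = r) :
    ∃ d : n → ℂ, (∀ i, d i ≠ 0) ∧
      A.map (algebraMap ℝ ℂ) * diagonal d = (μ / r) • (diagonal d * A.map (algebraMap ℝ ℂ)) := by
  obtain ⟨y, hy0, hy⟩ := exists_mulVec_eq_smul_of_isRoot_charpoly hμ
  set z : n → ℝ := (‖y ·‖)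
  have hz0 : z ≠ 0 := fun h => hy0 (funext fun i => norm_eq_zero.1 (congrFun h i))
  have hle := norm_smul_le_mulVec_norm hA.nonneg hy
  rw [hμr] at hle
  have hAz := hA.mulVec_eq_smul_of_smul_le_mulVec hdom hr (fun i => norm_nonneg _) hz0 hle
  have hzpos := hA.pos_of_mulVec_eq_smul hr.le (fun i => norm_nonneg _) hz0 hAz
  -- Row `i` of `A z = r z` is the equality case of the triangle inequality for
  -- `∑ₖ Aᵢₖ yₖ = μ yᵢ`, so every term `Aᵢⱼ yⱼ` points in the direction of `μ yᵢ`.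
  have hray : ∀ i j, (A i j * z j : ℂ) * (μ * y i) = (r * z i : ℂ) * (A i j * y j) := by
    intro i j
    have hrow : ∑ k, A.map (algebraMap ℝ ℂ) i k * y k = μ * y i := congrFun hy i
    have hnorm : ∑ k, ‖A.map (algebraMap ℝ ℂ) i k * y k‖ = r * z i := by
      simp only [norm_map_algebraMap_mul hA.nonneg]
      exact congrFun hAz i
    have hsum : ‖∑ k, A.map (algebraMap ℝ ℂ) i k * y k‖ =
        ∑ k, ‖A.map (algebraMap ℝ ℂ) i k * y k‖ := by
      rw [hnorm, hrow, norm_mul, hμr]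
    have := (sameRay_sum_of_norm_sum_eq_sum_norm hsum (mem_univ j)).norm_smul_eq
    rw [hsum, hnorm, hrow, norm_map_algebraMap_mul hA.nonneg] at this
    simpa [Complex.real_smul, map_apply] using this
  refine ⟨fun i => y i / z i, fun i => ?_, ?_⟩
  · exact div_ne_zero (norm_pos_iff.1 (hzpos i)) (Complex.ofReal_ne_zero.2 (hzpos i).ne')
  ext i j
  rw [mul_diagonal, smul_apply, diagonal_mul, map_apply, Complex.coe_algebraMap, smul_eq_mul]
  rcases eq_or_ne (A i j) 0 with hij | hij
  · simp [hij]
  have hzi : (z i : ℂ) ≠ 0 := Complex.ofReal_ne_zero.2 (hzpos i).ne'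
  have hzj : (z j : ℂ) ≠ 0 := Complex.ofReal_ne_zero.2 (hzpos j).ne'
  have hr' : (r : ℂ) ≠ 0 := Complex.ofReal_ne_zero.2 hr.ne'
  have hA' : (A i j : ℂ) ≠ 0 := Complex.ofReal_ne_zero.2 hij
  field_simp
  exact mul_left_cancel₀ hA' (by linear_combination -hray i j)

theorem IsIrreducible.isRoot_charpoly_div_mul (hA : A.IsIrreducible)
    (hdom : ∀ μ, (A.map (algebraMap ℝ ℂ)).charpoly.IsRoot μ → ‖μ‖ ≤ r) (hr : 0 < r) {μ ν : ℂ}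
    (hμ : (A.map (algebraMap ℝ ℂ)).charpoly.IsRoot μ) (hμr : ‖μ‖ = r)
    (hν : (A.map (algebraMap ℝ ℂ)).charpoly.IsRoot ν) :
    (A.map (algebraMap ℝ ℂ)).charpoly.IsRoot (μ / r * ν) := by
  obtain ⟨d, hd, hAd⟩ := hA.exists_mul_diagonal_eq_smul_diagonal_mul hdom hr hμ hμr
  exact isRoot_charpoly_mul_of_mul_eq_smul_mul (by simpa [det_diagonal, prod_ne_zero_iff]) hAd hν

end Real

end Matrix

/-- Perron–Frobenius theorem: the eigenvalues of maximal absolute value of an irreducible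
nonnegative real square matrix are exactly `exp(2πik/h)·lam`, `k = 0, …, h-1`, for some
positive integer `h` (the period). -/
theorem dominant_eigenvalues_are_rotations {m : ℕ} (M : Matrix (Fin m) (Fin m) ℝ)
    (hnn : ∀ i j, 0 ≤ M i j) (hirr : M.IsIrreducible')
    (lam : ℝ) (hpos : 0 < lam) (hroot : M.complexCharpoly.IsRoot (lam : ℂ))
    (hdom : ∀ μ : ℂ, M.complexCharpoly.IsRoot μ → ‖μ‖ ≤ lam) :
    ∃ h : ℕ, 0 < h ∧ ∀ μ : ℂ,
      (M.complexCharpoly.IsRoot μ ∧ ‖μ‖ = lam) ↔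
      (∃ k < h, μ = Complex.exp (2 * Real.pi * Complex.I * k / h) * lam) := by
  have hM : M.IsIrreducible := (isIrreducible_iff_exists_pow_pos hnn).2 fun i j =>
    let ⟨k, hk⟩ := hirr i j; ⟨k + 1, k.succ_pos, hk⟩
  have hlam : (lam : ℂ) ≠ 0 := Complex.ofReal_ne_zero.2 hpos.ne'
  set T : Finset ℂ := (M.complexCharpoly.roots.toFinset.filter (‖·‖ = lam)).image (· / lam)
  have hT : ∀ μ, (M.complexCharpoly.IsRoot μ ∧ ‖μ‖ = lam) ↔ μ / lam ∈ T := by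
    have hne : M.complexCharpoly ≠ 0 := (charpoly_monic _).ne_zero
    simp [T, mem_roots', hne, div_left_inj' hlam]
  have hmemT : ∀ x, x ∈ T ↔ M.complexCharpoly.IsRoot (x * lam) ∧ ‖x‖ = 1 := fun x => by
    rw [← mul_div_cancel_right₀ x hlam, ← hT, mul_div_cancel_right₀ x hlam, norm_mul,
      Complex.norm_real, Real.norm_of_nonneg hpos.le, mul_eq_right₀ hpos.ne']
  have h1 : (1 : ℂ) ∈ T := (hmemT 1).2 ⟨by rwa [one_mul], norm_one⟩
  have h0 : (0 : ℂ) ∉ T := fun h => by simp [hmemT] at h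
  have hmul : ∀ x ∈ T, ∀ y ∈ T, x * y ∈ T := by
    intro x hx y hy
    rw [hmemT] at hx hy ⊢
    have hrot := hM.isRoot_charpoly_div_mul hdom hpos hx.1 (by simp [hx.2, hpos.le]) hy.1
    rw [mul_div_cancel_right₀ x hlam, ← mul_assoc] at hrot
    exact ⟨hrot, by rw [norm_mul, hx.2, hy.2, one_mul]⟩
  have hTpos : 0 < #T := card_pos.2 ⟨1, h1⟩
  refine ⟨#T, hTpos, fun μ => ?_⟩
  rw [hT, mem_iff_pow_card_eq_one_of_mul_mem ⟨1, h1⟩ h0 hmul,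
    Complex.pow_eq_one_iff_exists_exp hTpos.ne']
  simp_rw [div_eq_iff hlam]
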